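/- Let (𝔄, G, Θ) be a C*-dynamical system with G countable discrete amenable, and let A ⊆ 𝔄 satisfy Θ_g A ⊆ A for all g ∈ G. If there exists a (not necessarily invariant) state on 𝔄 vanishing on A, then there exists a Θ-invariant state on 𝔄 vanishing on A. -/

import Mathlib

/-! Averaging a state `φ` along a Følner sequence gives states `φ ∘ Avg_{F_k}` that still vanish
on the invariant set `S`. Since each `Θ_g` is isometric, `φ ∘ Avg_{F_k}` fails to be
`Θ_g`-invariant at `x` by at most `‖φ‖ ‖x‖ |F_k g ∆ F_k| / |F_k| → 0`. By Banach–Alaoglu these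
states have a weak-* cluster point; being a state and vanishing on `S` are weak-* closed
conditions, and invariance passes to the limit. -/

open scoped ComplexOrder symmDiff

/-- A state on a unital C*-algebra, as an element of the weak-* dual. -/
def IsState {A : Type*} [NormedRing A] [StarRing A] [CStarRing A] [NormedAlgebra ℂ A]
    [CompleteSpace A] [StarModule ℂ A] (φ : WeakDual ℂ A) : Prop :=
  φ 1 = 1 ∧ ∀ a : A, 0 ≤ φ (star a * a)

/-- An action by algebra automorphisms is a *-action if each automorphism preserves `star`,
i.e. each `Θ g` is a *-automorphism. -/
def IsStarAction {A G : Type*} [NormedRing A] [StarRing A] [NormedAlgebra ℂ A] [Group G]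
    (Θ : G →* (A ≃ₐ[ℂ] A)) : Prop :=
  ∀ (g : G) (x : A), Θ g (star x) = star (Θ g x)

/-- The ergodic average `Avg_F x = (1/|F|) ∑_{g ∈ F} Θ_g x`. -/
noncomputable def avg {A G : Type*} [NormedRing A] [NormedAlgebra ℂ A] [Group G]
    (Θ : G →* (A ≃ₐ[ℂ] A)) (F : Finset G) (x : A) : A :=
  ((F.card : ℂ))⁻¹ • ∑ g ∈ F, Θ g x

/-- A right Følner sequence: nonempty finite sets with `|F_k g Δ F_k| / |F_k| → 0`. -/
def RightFolner {G : Type*} [Group G] [DecidableEq G] (F : ℕ → Finset G) : Prop :=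
  (∀ k, (F k).Nonempty) ∧ ∀ g : G, Filter.Tendsto
    (fun k => ((Finset.image (· * g) (F k) ∆ F k).card : ℝ) / (F k).card)
    Filter.atTop (nhds 0)

open Filter Topology Finset

theorem MapClusterPt.eq_of_tendsto {X α : Type*} [TopologicalSpace X] [T2Space X]
    {l : Filter α} {u : α → X} {x y : X} (hx : MapClusterPt x l u) (hy : Tendsto u l (𝓝 y)) :
    x = y :=
  eq_of_nhds_neBot (hx.clusterPt.mono hy)

theorem norm_sum_sub_sum_le_card_symmDiff_mul {ι E : Type*} [DecidableEq ι]
    [SeminormedAddCommGroup E] {u : ι → E} {M : ℝ} (hu : ∀ i, ‖u i‖ ≤ M) (B C : Finset ι) :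
    ‖∑ i ∈ B, u i - ∑ i ∈ C, u i‖ ≤ #(B ∆ C) * M := by
  have hsum (s : Finset ι) : ‖∑ i ∈ s, u i‖ ≤ #s * M :=
    (norm_sum_le _ _).trans (by simpa using sum_le_card_nsmul s _ M fun i _ => hu i)
  rw [← sum_sdiff_sub_sum_sdiff, Finset.symmDiff_def, card_union_of_disjoint disjoint_sdiff_sdiff]
  push_cast
  linarith [norm_sub_le (∑ i ∈ B \ C, u i) (∑ i ∈ C \ B, u i), hsum (B \ C), hsum (C \ B)]

section Averages

variable {A G : Type*} [NormedRing A] [NormedAlgebra ℂ A] [Group G] (Θ : G →* (A ≃ₐ[ℂ] A))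

theorem avg_one {F : Finset G} (hF : F.Nonempty) : avg Θ F 1 = 1 := by
  have hcard : (#F : ℂ) ≠ 0 := by exact_mod_cast hF.card_pos.ne'
  simp only [avg, map_one, sum_const]
  rw [← Nat.cast_smul_eq_nsmul ℂ, smul_smul, inv_mul_cancel₀ hcard, one_smul]

theorem avg_map_eq_smul_sum_image [DecidableEq G] (F : Finset G) (g : G) (x : A) :
    avg Θ F (Θ g x) = (#F : ℂ)⁻¹ • ∑ h ∈ F.image (· * g), Θ h x := by
  rw [avg, sum_image fun _ _ _ _ => mul_right_cancel]
  simp [map_mul]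

theorem apply_avg_eq_zero {S : Set A} (hS : ∀ g : G, ∀ a ∈ S, Θ g a ∈ S) {φ : A →ₗ[ℂ] ℂ}
    (hφ : ∀ a ∈ S, φ a = 0) (F : Finset G) {a : A} (ha : a ∈ S) : φ (avg Θ F a) = 0 := by
  simp [avg, hφ _ (hS _ a ha)]

end Averages

section StarAction

variable {A G : Type*} [NormedRing A] [StarRing A] [CStarRing A] [NormedAlgebra ℂ A]
  [CompleteSpace A] [StarModule ℂ A] [Group G] {Θ : G →* (A ≃ₐ[ℂ] A)}

theorem IsStarAction.norm_apply (hΘ : IsStarAction Θ) (g : G) (x : A) : ‖Θ g x‖ = ‖x‖ :=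
  letI : CStarAlgebra A := {}
  StarAlgEquiv.norm_map (StarAlgEquiv.ofAlgEquiv (Θ g) (hΘ g)) x

theorem IsStarAction.norm_avg_le (hΘ : IsStarAction Θ) (F : Finset G) (x : A) :
    ‖avg Θ F x‖ ≤ ‖x‖ := by
  rcases F.eq_empty_or_nonempty with rfl | hF
  · simp [avg]
  calc ‖avg Θ F x‖ ≤ (#F : ℝ)⁻¹ * (#F * ‖x‖) := by
        rw [avg, norm_smul, norm_inv, Complex.norm_natCast]
        gcongr
        simpa [hΘ.norm_apply] using norm_sum_le F fun g => Θ g x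
    _ = ‖x‖ := by field_simp [hF.card_pos.ne']

theorem IsStarAction.norm_avg_map_sub_avg_le [DecidableEq G] (hΘ : IsStarAction Θ)
    (F : Finset G) (g : G) (x : A) :
    ‖avg Θ F (Θ g x) - avg Θ F x‖ ≤ #(F.image (· * g) ∆ F) / #F * ‖x‖ := by
  rw [avg_map_eq_smul_sum_image, avg, ← smul_sub, norm_smul, norm_inv, Complex.norm_natCast]
  calc _ ≤ (#F : ℝ)⁻¹ * (#(F.image (· * g) ∆ F) * ‖x‖) := by
        gcongr
        exact norm_sum_sub_sum_le_card_symmDiff_mul (fun h => (hΘ.norm_apply h x).le) _ _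
    _ = _ := by ring

theorem IsStarAction.tendsto_avg_map_sub_avg [DecidableEq G] (hΘ : IsStarAction Θ)
    {F : ℕ → Finset G} (hF : RightFolner F) (g : G) (x : A) :
    Tendsto (fun k => avg Θ (F k) (Θ g x) - avg Θ (F k) x) atTop (𝓝 0) :=
  squeeze_zero_norm (fun k => hΘ.norm_avg_map_sub_avg_le _ g x)
    (by simpa using (hF.2 g).mul_const ‖x‖)

noncomputable def IsStarAction.avgCLM (hΘ : IsStarAction Θ) (F : Finset G) : A →L[ℂ] A :=
  LinearMap.mkContinuous
    { toFun := avg Θ F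
      map_add' := fun x y => by simp [avg, sum_add_distrib]
      map_smul' := fun c x => by simp [avg, smul_sum, smul_comm c] }
    1 fun x => (hΘ.norm_avg_le F x).trans_eq (one_mul _).symm

theorem IsStarAction.norm_avgCLM_le (hΘ : IsStarAction Θ) (F : Finset G) :
    ‖hΘ.avgCLM F‖ ≤ 1 :=
  LinearMap.mkContinuous_norm_le _ zero_le_one _

noncomputable def IsStarAction.meanFunctional (hΘ : IsStarAction Θ) (φ : WeakDual ℂ A)
    (F : Finset G) : WeakDual ℂ A :=
  StrongDual.toWeakDual ((WeakDual.toStrongDual φ).comp (hΘ.avgCLM F))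

@[simp]
theorem IsStarAction.meanFunctional_apply (hΘ : IsStarAction Θ) (φ : WeakDual ℂ A)
    (F : Finset G) (x : A) : hΘ.meanFunctional φ F x = φ (avg Θ F x) :=
  rfl

theorem IsStarAction.norm_meanFunctional_le (hΘ : IsStarAction Θ) (φ : WeakDual ℂ A)
    (F : Finset G) :
    ‖WeakDual.toStrongDual (hΘ.meanFunctional φ F)‖ ≤ ‖WeakDual.toStrongDual φ‖ :=
  (ContinuousLinearMap.opNorm_comp_le _ _).trans
    (mul_le_of_le_one_right (norm_nonneg _) (hΘ.norm_avgCLM_le F))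

theorem IsState.meanFunctional {φ : WeakDual ℂ A} (hφ : IsState φ) (hΘ : IsStarAction Θ)
    {F : Finset G} (hF : F.Nonempty) : IsState (hΘ.meanFunctional φ F) := by
  refine ⟨by simp [avg_one Θ hF, hφ.1], fun a => ?_⟩
  simp only [IsStarAction.meanFunctional_apply, avg, map_smul, map_sum, map_mul, smul_eq_mul]
  exact mul_nonneg (by positivity) (sum_nonneg fun g _ => hΘ g a ▸ hφ.2 _)

theorem isClosed_setOf_isState : IsClosed {φ : WeakDual ℂ A | IsState φ} := by
  simp only [IsState, Set.ofPred_and, Set.ofPred_forall]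
  exact (isClosed_eq (WeakDual.eval_continuous 1) continuous_const).inter
    (isClosed_iInter fun a => isClosed_le continuous_const (WeakDual.eval_continuous _))

end StarAction

theorem stmt6_general {A G : Type*} [NormedRing A] [StarRing A] [CStarRing A] [NormedAlgebra ℂ A]
    [CompleteSpace A] [StarModule ℂ A] [Group G] [DecidableEq G]
    (Θ : G →* (A ≃ₐ[ℂ] A)) (hΘ : IsStarAction Θ)
    (hamen : ∃ F : ℕ → Finset G, RightFolner F)
    (S : Set A) (hSinv : ∀ g : G, ∀ a ∈ S, Θ g a ∈ S)
    (hvanish : ∃ φ : WeakDual ℂ A, IsState φ ∧ ∀ a ∈ S, φ a = 0) :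
    ∃ φ : WeakDual ℂ A, IsState φ ∧ (∀ (g : G) (x : A), φ (Θ g x) = φ x) ∧
      ∀ a ∈ S, φ a = 0 := by
  obtain ⟨F, hF⟩ := hamen
  obtain ⟨φ, hφ, hφS⟩ := hvanish
  let ψ k := hΘ.meanFunctional φ (F k)
  obtain ⟨Φ, -, hΦ⟩ := (WeakDual.isCompact_closedBall 0 ‖WeakDual.toStrongDual φ‖
    ).exists_mapClusterPt_of_frequently (l := atTop) (f := ψ) <| .of_forall fun k => by
      simpa using hΘ.norm_meanFunctional_le φ (F k)
  refine ⟨Φ, isClosed_setOf_isState.mem_of_mapClusterPt hΦ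
    (.of_forall fun k => hφ.meanFunctional hΘ (hF.1 k)), fun g x => ?_, fun a ha => ?_⟩
  · have hcont : Continuous fun χ : WeakDual ℂ A => χ (Θ g x) - χ x :=
      (WeakDual.eval_continuous _).sub (WeakDual.eval_continuous _)
    have hlim : Tendsto (fun k => ψ k (Θ g x) - ψ k x) atTop (𝓝 0) := by
      simpa [ψ, Function.comp_def] using
        ((WeakDual.toStrongDual φ).continuous.tendsto' 0 0 (map_zero _)).comp
          (hΘ.tendsto_avg_map_sub_avg hF g x)
    exact sub_eq_zero.mp ((hΦ.continuousAt_comp hcont.continuousAt).eq_of_tendsto hlim)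
  · exact (isClosed_eq (WeakDual.eval_continuous a) continuous_const).mem_of_mapClusterPt hΦ
      (.of_forall fun k => apply_avg_eq_zero Θ hSinv hφS (F k) ha)

/-- If a Θ-invariant subset `S ⊆ 𝔄` is annihilated by some state, it is annihilated by
some Θ-invariant state. -/
theorem stmt6 {A G : Type*} [NormedRing A] [StarRing A] [CStarRing A] [NormedAlgebra ℂ A]
    [CompleteSpace A] [StarModule ℂ A] [Group G] [Countable G] [DecidableEq G]
    (Θ : G →* (A ≃ₐ[ℂ] A)) (hΘ : IsStarAction Θ)
    (hamen : ∃ F : ℕ → Finset G, RightFolner F)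
    (S : Set A) (hSinv : ∀ g : G, ∀ a ∈ S, Θ g a ∈ S)
    (hvanish : ∃ φ : WeakDual ℂ A, IsState φ ∧ ∀ a ∈ S, φ a = 0) :
    ∃ φ : WeakDual ℂ A, IsState φ ∧ (∀ (g : G) (x : A), φ (Θ g x) = φ x) ∧
      ∀ a ∈ S, φ a = 0 :=
  stmt6_general Θ hΘ hamen S hSinv hvanish
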